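/- arXiv:1809.08616 — 3 statements merged into one kernel-verified Lean document; each statement's English description precedes it below -/
import Mathlib

section
/- Under the hypotheses of the Sewing Lemma, let 0 ≤ γ < α and suppose there are a real Banach space (E, ‖·‖_E), a continuous linear injection ι : E → W with ‖ι(e)‖ ≤ ‖e‖_E, a constant C₀, and for each t ∈ (0,T] a linear map S_E(t) : W → E with ι(S_E(t)x) = S(t)x and ‖S_E(t)x‖_E ≤ C₀ t^{−γ}‖x‖ for all x ∈ W, and additionally a constant C₁ with ‖S(h)(ι(e)) − ι(e)‖ ≤ C₁ h^γ ‖e‖_E for all h ∈ [0,T] and e ∈ E. Then there is a constant C depending only on c_S, C₀, C₁, α, β, ρ, γ and T such that |IΞ(t) − IΞ(s)| ≤ C (c₁ + c₂)(t−s)^γ T^{α−γ} for all 0 ≤ s ≤ t ≤ T. -/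
/-!
Split `I t - I s = (I t - S (t - s) (I s)) + (S (t - s) (I s) - I s)`; the first term is the
sewing bound. For the second, `I s` is the limit of `S (s / 2 ^ n) (I (s - s / 2 ^ n))`, whose
increments are `S δ x` with `δ = s / 2 ^ (n + 1)` and `‖x‖ ≲ δ ^ α`. Such an `S δ x` is the image
of an element of `E` of norm `≲ δ ^ (α - γ)`, so `S h - 1` maps it to something of size
`≲ h ^ γ δ ^ (α - γ)`, and these bounds sum geometrically to `≲ h ^ γ s ^ (α - γ)`.
-/

open Filter Topology

lemma rpow_le_rpow_mul_rpow_sub {x T α γ : ℝ} (hx : 0 ≤ x) (hxT : x ≤ T) (hα : 0 < α)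
    (hγα : γ ≤ α) : x ^ α ≤ x ^ γ * T ^ (α - γ) := by
  calc x ^ α = x ^ γ * x ^ (α - γ) := by
        rw [← Real.rpow_add' hx (by linarith)]; ring_nf
    _ ≤ x ^ γ * T ^ (α - γ) := by gcongr

lemma div_two_pow_rpow {s : ℝ} (hs : 0 ≤ s) (e : ℝ) (n : ℕ) :
    (s / 2 ^ n) ^ e = s ^ e * ((2 : ℝ) ^ e)⁻¹ ^ n := by
  rw [Real.div_rpow hs (by positivity), ← Real.rpow_pow_comm (by norm_num), div_eq_mul_inv,
    inv_pow]

section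

variable {W : Type*} [NormedAddCommGroup W] [NormedSpace ℝ W]

lemma norm_semigroup_sub_apply_smoothing_le {E : Type*} [NormedAddCommGroup E]
    [NormedSpace ℝ E] {S : ℝ → W →L[ℝ] W} {ι : E →L[ℝ] W} {SE : W →ₗ[ℝ] E}
    {h δ γ C₀ C₁ : ℝ} (hSE : ∀ x, ι (SE x) = S δ x)
    (hSEbd : ∀ x, ‖SE x‖ ≤ C₀ * δ ^ (-γ) * ‖x‖)
    (hSId : ∀ e, ‖S h (ι e) - ι e‖ ≤ C₁ * h ^ γ * ‖e‖) (hC₁ : 0 ≤ C₁) (hh : 0 ≤ h) (x : W) :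
    ‖S h (S δ x) - S δ x‖ ≤ C₁ * C₀ * h ^ γ * δ ^ (-γ) * ‖x‖ := by
  rw [← hSE]
  calc ‖S h (ι (SE x)) - ι (SE x)‖ ≤ C₁ * h ^ γ * ‖SE x‖ := hSId _
    _ ≤ C₁ * h ^ γ * (C₀ * δ ^ (-γ) * ‖x‖) := by gcongr; exact hSEbd x
    _ = C₁ * C₀ * h ^ γ * δ ^ (-γ) * ‖x‖ := by ring

noncomputable def dyadicApprox (S : ℝ → W →L[ℝ] W) (I : ℝ → W) (s : ℝ) (n : ℕ) : W :=
  S (s / 2 ^ n) (I (s - s / 2 ^ n))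

variable {S : ℝ → W →L[ℝ] W} {I : ℝ → W} {s : ℝ}

lemma dyadicApprox_zero (hI0 : I 0 = 0) : dyadicApprox S I s 0 = 0 := by
  simp [dyadicApprox, hI0]

lemma dyadicApprox_succ_sub (hSadd : ∀ t r : ℝ, 0 ≤ t → 0 ≤ r → S (t + r) = (S t).comp (S r))
    (hs : 0 ≤ s) (n : ℕ) :
    dyadicApprox S I s (n + 1) - dyadicApprox S I s n =
      S (s / 2 ^ (n + 1))
        (I (s - s / 2 ^ (n + 1)) - S (s / 2 ^ (n + 1)) (I (s - s / 2 ^ n))) := by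
  have hsplit : s / 2 ^ n = s / 2 ^ (n + 1) + s / 2 ^ (n + 1) := by ring
  have hδ : 0 ≤ s / 2 ^ (n + 1) := by positivity
  rw [dyadicApprox, dyadicApprox, map_sub, hsplit, hSadd _ _ hδ hδ, ← hsplit,
    ContinuousLinearMap.comp_apply]

lemma tendsto_dyadicApprox {T M α : ℝ}
    (hI : ∀ r t : ℝ, 0 ≤ r → r ≤ t → t ≤ T → ‖I t - S (t - r) (I r)‖ ≤ M * (t - r) ^ α)
    (hα : 0 < α) (hs : 0 ≤ s) (hsT : s ≤ T) :
    Tendsto (dyadicApprox S I s) atTop (𝓝 (I s)) := by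
  have hdist : ∀ n : ℕ, ‖dyadicApprox S I s n - I s‖ ≤ M * (s ^ α * ((2 : ℝ) ^ α)⁻¹ ^ n) := by
    intro n
    have hδs : s / 2 ^ n ≤ s := div_le_self hs (one_le_pow₀ (by norm_num))
    have := hI (s - s / 2 ^ n) s (by linarith) (by linarith [show 0 ≤ s / 2 ^ n by positivity])
      hsT
    rwa [sub_sub_cancel, ← norm_neg, neg_sub, div_two_pow_rpow hs] at this
  have hgeom : Tendsto (fun n : ℕ => M * (s ^ α * ((2 : ℝ) ^ α)⁻¹ ^ n)) atTop (𝓝 0) := by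
    simpa using (tendsto_pow_atTop_nhds_zero_of_lt_one (by positivity)
      (inv_lt_one_of_one_lt₀ (Real.one_lt_rpow (by norm_num) hα))).const_mul (s ^ α) |>.const_mul M
  exact tendsto_iff_norm_sub_tendsto_zero.2 (squeeze_zero (fun _ => norm_nonneg _) hdist hgeom)

lemma norm_semigroup_sub_apply_le {E : Type*} [NormedAddCommGroup E] [NormedSpace ℝ E]
    {ι : E →L[ℝ] W} {SE : ℝ → W →ₗ[ℝ] E} {T M α γ C₀ C₁ h : ℝ}
    (hSadd : ∀ t r : ℝ, 0 ≤ t → 0 ≤ r → S (t + r) = (S t).comp (S r)) (hI0 : I 0 = 0)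
    (hI : ∀ r t : ℝ, 0 ≤ r → r ≤ t → t ≤ T → ‖I t - S (t - r) (I r)‖ ≤ M * (t - r) ^ α)
    (hα : 0 < α) (hγα : γ < α) (hC₀ : 0 ≤ C₀) (hC₁ : 0 ≤ C₁)
    (hSE : ∀ t, 0 < t → t ≤ T → ∀ x, ι (SE t x) = S t x)
    (hSEbd : ∀ t, 0 < t → t ≤ T → ∀ x, ‖SE t x‖ ≤ C₀ * t ^ (-γ) * ‖x‖)
    (hSId : ∀ e, ‖S h (ι e) - ι e‖ ≤ C₁ * h ^ γ * ‖e‖) (hh : 0 ≤ h) (hs : 0 ≤ s) (hsT : s ≤ T) :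
    ‖S h (I s) - I s‖ ≤ C₁ * C₀ * M * h ^ γ * s ^ (α - γ) / (2 ^ (α - γ) - 1) := by
  rcases hs.eq_or_lt with rfl | hs
  · simp [hI0, Real.zero_rpow (sub_ne_zero.2 hγα.ne')]
  set q : ℝ := 2 ^ (α - γ)
  have hq : 1 < q := Real.one_lt_rpow (by norm_num) (sub_pos.2 hγα)
  set A := dyadicApprox S I s
  set f : ℕ → W := fun n => S h (A n) - A n
  have hinc : ∀ n, dist (f n) (f (n + 1)) ≤
      C₁ * C₀ * M * h ^ γ * s ^ (α - γ) * q⁻¹ * q⁻¹ ^ n := by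
    intro n
    set δ := s / 2 ^ (n + 1)
    have hδ : 0 < δ := by positivity
    have hδT : δ ≤ T := (div_le_self hs.le (one_le_pow₀ (by norm_num))).trans hsT
    have hx : ‖I (s - δ) - S δ (I (s - s / 2 ^ n))‖ ≤ M * δ ^ α := by
      have hhalf : s / 2 ^ n = 2 * δ := by simp only [δ, pow_succ]; field_simp
      have hle : s / 2 ^ n ≤ s := div_le_self hs.le (one_le_pow₀ (by norm_num))
      have := hI (s - s / 2 ^ n) (s - δ) (by linarith) (by linarith) (by linarith)
      rwa [show s - δ - (s - s / 2 ^ n) = δ by linarith] at this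
    have hfA : f (n + 1) - f n = S h (A (n + 1) - A n) - (A (n + 1) - A n) := by
      simp only [f, map_sub]; abel
    rw [dist_comm, dist_eq_norm, hfA, dyadicApprox_succ_sub hSadd hs.le]
    calc _ ≤ C₁ * C₀ * h ^ γ * δ ^ (-γ) * ‖I (s - δ) - S δ (I (s - s / 2 ^ n))‖ :=
          norm_semigroup_sub_apply_smoothing_le (hSE δ hδ hδT) (hSEbd δ hδ hδT) hSId hC₁ hh _
      _ ≤ C₁ * C₀ * h ^ γ * δ ^ (-γ) * (M * δ ^ α) := by gcongr
      _ = C₁ * C₀ * M * h ^ γ * δ ^ (α - γ) := by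
          rw [sub_eq_neg_add, Real.rpow_add hδ]; ring
      _ = _ := by rw [div_two_pow_rpow hs.le, pow_succ]; ring
  have hlim : Tendsto f atTop (𝓝 (S h (I s) - I s)) := by
    have hA := tendsto_dyadicApprox hI hα hs.le hsT
    exact (((S h).continuous.tendsto _).comp hA).sub hA
  have := dist_le_of_le_geometric_of_tendsto₀ _ _ (inv_lt_one_of_one_lt₀ hq) hinc hlim
  rw [show f 0 = 0 by simp [f, A, dyadicApprox_zero hI0], dist_zero_left] at this
  convert this using 1
  field_simp

end

theorem sewing_map_delta_estimate_general
    {W E : Type*} [NormedAddCommGroup W] [NormedSpace ℝ W]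
    [NormedAddCommGroup E] [NormedSpace ℝ E]
    (T : ℝ)
    (S : ℝ → W →L[ℝ] W)
    (hSadd : ∀ t s : ℝ, 0 ≤ t → 0 ≤ s → S (t + s) = (S t).comp (S s))
    (c₁ c₂ α : ℝ) (hc₁ : 0 ≤ c₁) (hc₂ : 0 ≤ c₂)
    -- `I` is the sewing map of `Ξ` provided by the Sewing Lemma:
    (I : ℝ → W) (hI0 : I 0 = 0)
    (CI : ℝ)
    (hIbd1 : ∀ s t : ℝ, 0 ≤ s → s ≤ t → t ≤ T →
      ‖I t - S (t - s) (I s)‖ ≤ CI * (c₁ + c₂) * (t - s) ^ α)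
    -- the fractional domain `D_γ` structure:
    (γ : ℝ) (hγ0 : 0 ≤ γ) (hγα : γ < α)
    (ι : E →L[ℝ] W)
    (C₀ : ℝ) (hC₀ : 0 ≤ C₀)
    (SE : ℝ → W →ₗ[ℝ] E)
    (hSE : ∀ t : ℝ, 0 < t → t ≤ T → ∀ x : W, ι (SE t x) = S t x)
    (hSEbd : ∀ t : ℝ, 0 < t → t ≤ T → ∀ x : W, ‖SE t x‖ ≤ C₀ * t ^ (-γ) * ‖x‖)
    (C₁ : ℝ) (hC₁ : 0 ≤ C₁)
    (hSId : ∀ h : ℝ, 0 ≤ h → h ≤ T → ∀ e : E, ‖S h (ι e) - ι e‖ ≤ C₁ * h ^ γ * ‖e‖) :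
    ∃ C : ℝ, 0 ≤ C ∧ ∀ s t : ℝ, 0 ≤ s → s ≤ t → t ≤ T →
      ‖I t - I s‖ ≤ C * (c₁ + c₂) * (t - s) ^ γ * T ^ (α - γ) := by
  set K := max CI 0
  have hα : 0 < α := hγ0.trans_lt hγα
  have hc : 0 ≤ c₁ + c₂ := add_nonneg hc₁ hc₂
  have hI : ∀ s t : ℝ, 0 ≤ s → s ≤ t → t ≤ T →
      ‖I t - S (t - s) (I s)‖ ≤ K * (c₁ + c₂) * (t - s) ^ α := fun s t hs hst htT =>
    (hIbd1 s t hs hst htT).trans (by gcongr; exact le_max_left _ _)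
  have hq : 0 < (2 : ℝ) ^ (α - γ) - 1 :=
    sub_pos.2 (Real.one_lt_rpow (by norm_num) (sub_pos.2 hγα))
  refine ⟨K * (1 + C₁ * C₀ / (2 ^ (α - γ) - 1)), by positivity, fun s t hs hst htT => ?_⟩
  have hts : 0 ≤ t - s := sub_nonneg.2 hst
  have htsT : t - s ≤ T := by linarith
  have hsT : s ≤ T := hst.trans htT
  calc ‖I t - I s‖ ≤ ‖I t - S (t - s) (I s)‖ + ‖S (t - s) (I s) - I s‖ :=
        norm_sub_le_norm_sub_add_norm_sub _ _ _
    _ ≤ K * (c₁ + c₂) * ((t - s) ^ γ * T ^ (α - γ)) +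
        C₁ * C₀ * (K * (c₁ + c₂)) * (t - s) ^ γ * T ^ (α - γ) / (2 ^ (α - γ) - 1) := by
        gcongr
        · exact (hI s t hs hst htT).trans
            (by gcongr; exact rpow_le_rpow_mul_rpow_sub hts htsT hα hγα.le)
        · refine (norm_semigroup_sub_apply_le hSadd hI0 hI hα hγα hC₀ hC₁ hSE hSEbd
            (hSId (t - s) hts htsT) hts hs hsT).trans ?_
          gcongr
    _ = K * (1 + C₁ * C₀ / (2 ^ (α - γ) - 1)) * (c₁ + c₂) * (t - s) ^ γ * T ^ (α - γ) := by
        ring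

/-- Hölder estimate for `δIΞ` via the fractional domain. -/
theorem sewing_map_delta_estimate
    {W E : Type*} [NormedAddCommGroup W] [NormedSpace ℝ W] [CompleteSpace W]
    [NormedAddCommGroup E] [NormedSpace ℝ E] [CompleteSpace E]
    (T : ℝ) (hT : 0 < T)
    (S : ℝ → W →L[ℝ] W)
    (hS0 : S 0 = ContinuousLinearMap.id ℝ W)
    (hSadd : ∀ t s : ℝ, 0 ≤ t → 0 ≤ s → S (t + s) = (S t).comp (S s))
    (cS : ℝ) (hScS : ∀ t : ℝ, 0 ≤ t → t ≤ T → ‖S t‖ ≤ cS)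
    (Ξ : ℝ → ℝ → W)
    (hΞcont : ContinuousOn (fun p : ℝ × ℝ => Ξ p.1 p.2)
      {p : ℝ × ℝ | 0 ≤ p.2 ∧ p.2 ≤ p.1 ∧ p.1 ≤ T})
    (c₁ c₂ α β ρ : ℝ) (hc₁ : 0 ≤ c₁) (hc₂ : 0 ≤ c₂)
    (hα0 : 0 ≤ α) (hα1 : α ≤ 1) (hβ0 : 0 ≤ β) (hβ1 : β ≤ 1) (hρ : 1 < ρ)
    (hαβρ : α + β ≤ ρ)
    (hΞ1 : ∀ u v : ℝ, 0 ≤ u → u ≤ v → v ≤ T → ‖Ξ v u‖ ≤ c₁ * (v - u) ^ α)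
    (hΞ2 : ∀ u m v : ℝ, 0 < u → u ≤ m → m ≤ v → v ≤ T →
      ‖Ξ v u - Ξ v m - S (v - m) (Ξ m u)‖ ≤ c₂ * u ^ (-β) * (v - u) ^ ρ)
    -- `I` is the sewing map of `Ξ` provided by the Sewing Lemma:
    (I : ℝ → W) (hIcont : ContinuousOn I (Set.Icc 0 T)) (hI0 : I 0 = 0)
    (CI : ℝ)
    (hIbd1 : ∀ s t : ℝ, 0 ≤ s → s ≤ t → t ≤ T →
      ‖I t - S (t - s) (I s)‖ ≤ CI * (c₁ + c₂) * (t - s) ^ α)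
    (hIbd2 : ∀ s t : ℝ, 0 < s → s ≤ t → t ≤ T →
      ‖I t - S (t - s) (I s) - Ξ t s‖ ≤ CI * c₂ * s ^ (-β) * (t - s) ^ ρ)
    -- the fractional domain `D_γ` structure:
    (γ : ℝ) (hγ0 : 0 ≤ γ) (hγα : γ < α)
    (ι : E →L[ℝ] W) (hιinj : Function.Injective ι) (hιnorm : ∀ e : E, ‖ι e‖ ≤ ‖e‖)
    (C₀ : ℝ) (hC₀ : 0 ≤ C₀)
    (SE : ℝ → W →ₗ[ℝ] E)
    (hSE : ∀ t : ℝ, 0 < t → t ≤ T → ∀ x : W, ι (SE t x) = S t x)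
    (hSEbd : ∀ t : ℝ, 0 < t → t ≤ T → ∀ x : W, ‖SE t x‖ ≤ C₀ * t ^ (-γ) * ‖x‖)
    (C₁ : ℝ) (hC₁ : 0 ≤ C₁)
    (hSId : ∀ h : ℝ, 0 ≤ h → h ≤ T → ∀ e : E, ‖S h (ι e) - ι e‖ ≤ C₁ * h ^ γ * ‖e‖) :
    ∃ C : ℝ, 0 ≤ C ∧ ∀ s t : ℝ, 0 ≤ s → s ≤ t → t ≤ T →
      ‖I t - I s‖ ≤ C * (c₁ + c₂) * (t - s) ^ γ * T ^ (α - γ) :=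
  sewing_map_delta_estimate_general T S hSadd c₁ c₂ α hc₁ hc₂ I hI0 CI hIbd1 γ hγ0 hγα ι C₀ hC₀ SE
    hSE hSEbd C₁ hC₁ hSId
end

section
/- Let V be a real separable Hilbert space, ω : [0,T] → V continuously differentiable with derivative ω', E ∈ L(W, L(V,W)) and K ∈ L(V,W). Define c_{ts}(E,K) := ∫_s^t S(t−r)( (E(K(ω(r) − ω(s))))(ω'(r)) ) dr (Bochner integral) for (t,s) ∈ Δ_T. Then for all 0 ≤ s ≤ τ ≤ t ≤ T one has (δ̂₂c)_{tτs}(E,K) := c_{ts}(E,K) − c_{tτ}(E,K) − S(t−τ)(c_{τs}(E,K)) = ∫_τ^t S(t−r)( (E(K(ω(τ) − ω(s))))(ω'(r)) ) dr. -/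
/-!
Split `∫_s^t = ∫_s^τ + ∫_τ^t` in `c_{ts}`. On `[s, τ]` the semigroup law turns
`S(t-τ) S(τ-r)` into `S(t-r)`, so that piece cancels `S(t-τ) c_{τs}`; on `[τ, t]` the
integrand is additive in its first argument and
`(ω r - ω s) - (ω r - ω τ) = ω τ - ω s`.
Strong continuity together with Banach–Steinhaus makes `(r, x) ↦ S r x` jointly continuous,
which gives all the integrability needed.
-/

open Filter Topology MeasureTheory intervalIntegral

theorem continuous_uncurry_of_continuous_apply {X 𝕜 E F : Type*} [TopologicalSpace X]
    [WeaklyLocallyCompactSpace X] [NontriviallyNormedField 𝕜] [NormedAddCommGroup E]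
    [NormedSpace 𝕜 E] [CompleteSpace E] [NormedAddCommGroup F] [NormedSpace 𝕜 F]
    {A : X → E →L[𝕜] F} (hA : ∀ x, Continuous fun t => A t x) :
    Continuous fun p : X × E => A p.1 p.2 := by
  rw [continuous_iff_continuousAt]
  rintro ⟨t₀, x₀⟩
  obtain ⟨N, hN, hNt₀⟩ := exists_compact_mem_nhds t₀
  obtain ⟨C, hC⟩ : ∃ C, ∀ t : N, ‖A t‖ ≤ C := banach_steinhaus fun x =>
    (hN.exists_bound_of_continuousOn (hA x).continuousOn).imp fun _ hC t => hC t t.2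
  have hsmall : Tendsto (fun p : X × E => A p.1 (p.2 - x₀)) (𝓝 (t₀, x₀)) (𝓝 0) := by
    refine squeeze_zero_norm' (a := fun p => C * ‖p.2 - x₀‖) ?_ ?_
    · filter_upwards [continuousAt_fst.preimage_mem_nhds hNt₀] with p hp
      exact (A p.1).le_of_opNorm_le (hC ⟨p.1, hp⟩) _
    · have hbound : Continuous fun p : X × E => C * ‖p.2 - x₀‖ := by fun_prop
      simpa using hbound.tendsto (t₀, x₀)
  simpa [ContinuousAt] using hsmall.add (((hA x₀).tendsto t₀).comp continuousAt_fst)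

section SupportingProcess

variable {U V W : Type*} [NormedAddCommGroup U] [NormedSpace ℝ U]
  [NormedAddCommGroup V] [NormedSpace ℝ V] [NormedAddCommGroup W] [NormedSpace ℝ W]

/-- The paper's `c_{ts}(E, K)` is `supportingProcess S (E ∘L K) ω ω' t s`. -/
noncomputable def supportingProcess (S : ℝ → W →L[ℝ] W) (B : V →L[ℝ] U →L[ℝ] W)
    (ω : ℝ → V) (ω' : ℝ → U) (t s : ℝ) : W :=
  ∫ r in s..t, S (t - r) (B (ω r - ω s) (ω' r))

variable [CompleteSpace W]

theorem ContinuousOn.semigroup_apply {S : ℝ → W →L[ℝ] W} (hS : ∀ x, Continuous fun t => S t x)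
    {g : ℝ → W} {A : Set ℝ} (hg : ContinuousOn g A) (t : ℝ) :
    ContinuousOn (fun r => S (t - r) (g r)) A :=
  (continuous_uncurry_of_continuous_apply hS).comp_continuousOn
    ((continuous_const.sub continuous_id).continuousOn.prodMk hg)

theorem semigroup_apply_intervalIntegral {S : ℝ → W →L[ℝ] W}
    (hSadd : ∀ t s : ℝ, 0 ≤ t → 0 ≤ s → S (t + s) = (S t).comp (S s))
    {f : ℝ → W} {s τ t : ℝ} (hsτ : s ≤ τ) (hτt : τ ≤ t)
    (hf : IntervalIntegrable (fun r => S (τ - r) (f r)) volume s τ) :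
    S (t - τ) (∫ r in s..τ, S (τ - r) (f r)) = ∫ r in s..τ, S (t - r) (f r) := by
  rw [← ContinuousLinearMap.intervalIntegral_comp_comm _ hf]
  refine integral_congr fun r hr => ?_
  rw [Set.uIcc_of_le hsτ] at hr
  have hS := hSadd (t - τ) (τ - r) (by linarith) (by linarith [hr.2])
  rw [sub_add_sub_cancel] at hS
  simp [hS]

theorem supportingProcess_delta {S : ℝ → W →L[ℝ] W}
    (hSadd : ∀ t s : ℝ, 0 ≤ t → 0 ≤ s → S (t + s) = (S t).comp (S s))
    (hScont : ∀ x, Continuous fun t => S t x) (B : V →L[ℝ] U →L[ℝ] W)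
    {ω : ℝ → V} {ω' : ℝ → U} {s τ t : ℝ} (hsτ : s ≤ τ) (hτt : τ ≤ t)
    (hω : ContinuousOn ω (Set.Icc s t)) (hω' : ContinuousOn ω' (Set.Icc s t)) :
    supportingProcess S B ω ω' t s - supportingProcess S B ω ω' t τ -
        S (t - τ) (supportingProcess S B ω ω' τ s) =
      ∫ r in τ..t, S (t - r) (B (ω τ - ω s) (ω' r)) := by
  have hint : ∀ (a : ℝ) (v : V) {x y : ℝ}, Set.Icc x y ⊆ Set.Icc s t → x ≤ y →
      IntervalIntegrable (fun r => S (a - r) (B (ω r - v) (ω' r))) volume x y := by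
    intro a v x y hxy hle
    refine ContinuousOn.intervalIntegrable ?_
    rw [Set.uIcc_of_le hle]
    exact ((B.continuous.comp_continuousOn ((hω.sub continuousOn_const).mono hxy)).clm_apply
      (hω'.mono hxy)).semigroup_apply hScont a
  have hsτt : Set.Icc s τ ⊆ Set.Icc s t := Set.Icc_subset_Icc_right hτt
  have hτts : Set.Icc τ t ⊆ Set.Icc s t := Set.Icc_subset_Icc_left hsτ
  have hsplit := integral_add_adjacent_intervals (hint t (ω s) hsτt hsτ) (hint t (ω s) hτts hτt)
  have hpush := semigroup_apply_intervalIntegral hSadd hsτ hτt (hint τ (ω s) hsτt hsτ)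
  have hcomb := integral_sub (hint t (ω s) hτts hτt) (hint t (ω τ) hτts hτt)
  unfold supportingProcess
  rw [← hsplit, hpush, add_sub_assoc, add_sub_cancel_left, ← hcomb]
  refine integral_congr fun r _ => ?_
  simp only [← map_sub, ← sub_apply, sub_sub_sub_cancel_left]

end SupportingProcess

theorem c_process_algebraic_relation_general
    {W V : Type*} [NormedAddCommGroup W] [NormedSpace ℝ W] [CompleteSpace W]
    [NormedAddCommGroup V] [InnerProductSpace ℝ V]
    (T : ℝ)
    (S : ℝ → W →L[ℝ] W)
    (hSadd : ∀ t s : ℝ, 0 ≤ t → 0 ≤ s → S (t + s) = (S t).comp (S s))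
    (hScont : ∀ x : W, Continuous fun t => S t x)
    (ω ω' : ℝ → V)
    (hω : ∀ r ∈ Set.Icc (0 : ℝ) T, HasDerivWithinAt ω (ω' r) (Set.Icc 0 T) r)
    (hω' : ContinuousOn ω' (Set.Icc 0 T))
    (E : W →L[ℝ] V →L[ℝ] W) (K : V →L[ℝ] W)
    (s τ t : ℝ) (hs : 0 ≤ s) (hsτ : s ≤ τ) (hτt : τ ≤ t) (htT : t ≤ T) :
    (∫ r in s..t, S (t - r) ((E (K (ω r - ω s))) (ω' r))) -
      (∫ r in τ..t, S (t - r) ((E (K (ω r - ω τ))) (ω' r))) -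
      S (t - τ) (∫ r in s..τ, S (τ - r) ((E (K (ω r - ω s))) (ω' r))) =
    ∫ r in τ..t, S (t - r) ((E (K (ω τ - ω s))) (ω' r)) := by
  have hst : Set.Icc s t ⊆ Set.Icc 0 T := Set.Icc_subset_Icc hs htT
  have hωc : ContinuousOn ω (Set.Icc 0 T) := fun r hr => (hω r hr).continuousWithinAt
  exact supportingProcess_delta hSadd hScont (E.comp K) hsτ hτt (hωc.mono hst) (hω'.mono hst)

/-- Algebraic relation `(δ̂₂c)_{tτs}(E,K) = ω^S_{tτ}(E K (δω)_{τs})`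
for the supporting process `c` of a smooth path. -/
theorem c_process_algebraic_relation
    {W V : Type*} [NormedAddCommGroup W] [NormedSpace ℝ W] [CompleteSpace W]
    [NormedAddCommGroup V] [InnerProductSpace ℝ V] [CompleteSpace V]
    [TopologicalSpace.SeparableSpace V]
    (T : ℝ) (hT : 0 < T)
    (S : ℝ → W →L[ℝ] W)
    (hS0 : S 0 = ContinuousLinearMap.id ℝ W)
    (hSadd : ∀ t s : ℝ, 0 ≤ t → 0 ≤ s → S (t + s) = (S t).comp (S s))
    (hScont : ∀ x : W, Continuous fun t => S t x)
    (ω ω' : ℝ → V)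
    (hω : ∀ r ∈ Set.Icc (0 : ℝ) T, HasDerivWithinAt ω (ω' r) (Set.Icc 0 T) r)
    (hω' : ContinuousOn ω' (Set.Icc 0 T))
    (E : W →L[ℝ] V →L[ℝ] W) (K : V →L[ℝ] W)
    (s τ t : ℝ) (hs : 0 ≤ s) (hsτ : s ≤ τ) (hτt : τ ≤ t) (htT : t ≤ T) :
    (∫ r in s..t, S (t - r) ((E (K (ω r - ω s))) (ω' r))) -
      (∫ r in τ..t, S (t - r) ((E (K (ω r - ω τ))) (ω' r))) -
      S (t - τ) (∫ r in s..τ, S (τ - r) ((E (K (ω r - ω s))) (ω' r))) =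
    ∫ r in τ..t, S (t - r) ((E (K (ω τ - ω s))) (ω' r)) :=
  c_process_algebraic_relation_general T S hSadd hScont ω ω' hω hω' E K s τ t hs hsτ hτt htT
end

section
/- Let 0 < α, β < 1, ρ > 1, C ≥ 0, and let κ : [0,T] → W be continuous with κ(0) = 0, |(δ̂κ)_{ts}| ≤ C (t−s)^α for all (t,s) ∈ Δ_T, and |(δ̂κ)_{ts}| ≤ C s^{−β} (t−s)^ρ for all 0 < s ≤ t ≤ T. Then κ(t) = 0 for all t ∈ [0,T]. -/
/-!
Split `[0, t]` into `n` steps of length `h = t / n`. The semigroup law telescopes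
`κ t = ∑ S(t - (i+1)h) (δ̂κ)_{(i+1)h, ih}`, so `‖κ t‖ ≤ c_S ∑ ‖(δ̂κ)_{(i+1)h, ih}‖`. The first
increment is `O(h^α)`; the weighted bound makes the `i`-th one `O(h^{ρ-β} i^{-β})`, and since
`∑_{i<n} i^{-β} = O(n^{1-β})` these add up to `O(t^{1-β} h^{ρ-1})`. Both terms vanish as
`h → 0` because `α > 0` and `ρ > 1`.
-/

open Real Finset Filter Topology

lemma mul_rpow_sub_one_le_rpow_sub_rpow_sub_one {p y : ℝ} (hp0 : 0 ≤ p) (hp1 : p ≤ 1)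
    (hy : 1 ≤ y) : p * y ^ (p - 1) ≤ y ^ p - (y - 1) ^ p := by
  have hy0 : 0 < y := by linarith
  have hs : -1 ≤ -(1 / y) := by linarith [(div_le_one hy0).mpr hy]
  -- Bernoulli's inequality, applied to `y - 1 = y * (1 - 1 / y)`
  have hbern := rpow_one_add_le_one_add_mul_self hs hp0 hp1
  calc p * y ^ (p - 1) = y ^ p - y ^ p * (1 + p * -(1 / y)) := by
        rw [rpow_sub_one hy0.ne']; ring
    _ ≤ y ^ p - (y * (1 + -(1 / y))) ^ p := by
        rw [mul_rpow hy0.le (by linarith)]; gcongr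
    _ = y ^ p - (y - 1) ^ p := by
        congr 2; field_simp; ring

lemma sum_range_add_one_rpow_neg_le {β : ℝ} (hβ0 : 0 ≤ β) (hβ1 : β < 1) (n : ℕ) :
    ∑ i ∈ range n, ((i : ℝ) + 1) ^ (-β) ≤ (n : ℝ) ^ (1 - β) / (1 - β) := by
  have hβ : 0 < 1 - β := by linarith
  induction n with
  | zero => simp [zero_rpow hβ.ne']
  | succ n ih =>
    have hstep := mul_rpow_sub_one_le_rpow_sub_rpow_sub_one (y := (n : ℝ) + 1) hβ.le
      (by linarith) (by linarith [n.cast_nonneg (α := ℝ)])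
    rw [show 1 - β - 1 = -β by ring, add_sub_cancel_right] at hstep
    rw [le_div_iff₀ hβ] at ih
    rw [sum_range_succ, Nat.cast_succ, le_div_iff₀ hβ, add_mul]
    linarith

section Semigroup

variable {W : Type*} [NormedAddCommGroup W] [NormedSpace ℝ W] {S : ℝ → W →L[ℝ] W} {κ : ℝ → W}

def hatDelta (S : ℝ → W →L[ℝ] W) (κ : ℝ → W) (t s : ℝ) : W := κ t - S (t - s) (κ s)

lemma sum_range_semigroup_hatDelta
    (hSadd : ∀ t s : ℝ, 0 ≤ t → 0 ≤ s → S (t + s) = (S t).comp (S s))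
    {h t : ℝ} (hh : 0 ≤ h) {n : ℕ} (hnt : n * h ≤ t) :
    ∑ i ∈ range n, S (t - (i + 1) * h) (hatDelta S κ ((i + 1) * h) (i * h)) =
      S (t - n * h) (κ (n * h)) - S t (κ 0) := by
  let g : ℕ → W := fun j ↦ S (t - j * h) (κ (j * h))
  have hstep : ∀ i ∈ range n,
      S (t - (i + 1) * h) (hatDelta S κ ((i + 1) * h) (i * h)) = g (i + 1) - g i := by
    intro i hi
    have hi : ((i + 1 : ℕ) : ℝ) ≤ n := by exact_mod_cast mem_range.mp hi
    have hsplit : S (t - i * h) = (S (t - (i + 1) * h)).comp (S h) := by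
      rw [← hSadd _ _ (by push_cast at hi; nlinarith) hh]; ring_nf
    simp only [g, hatDelta, map_sub, hsplit, ContinuousLinearMap.comp_apply]
    push_cast; ring_nf
  rw [sum_congr rfl hstep, sum_range_sub]
  simp [g]

lemma norm_le_mul_sum_norm_hatDelta (hS0 : S 0 = ContinuousLinearMap.id ℝ W)
    (hSadd : ∀ t s : ℝ, 0 ≤ t → 0 ≤ s → S (t + s) = (S t).comp (S s)) (hκ0 : κ 0 = 0)
    {h cS : ℝ} (hh : 0 ≤ h) (n : ℕ) (hScS : ∀ τ : ℝ, 0 ≤ τ → τ ≤ n * h → ‖S τ‖ ≤ cS) :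
    ‖κ (n * h)‖ ≤ cS * ∑ i ∈ range n, ‖hatDelta S κ ((i + 1) * h) (i * h)‖ := by
  have htel := sum_range_semigroup_hatDelta (κ := κ) hSadd hh (le_refl ((n : ℝ) * h))
  rw [sub_self, hS0, hκ0, map_zero, sub_zero, ContinuousLinearMap.id_apply] at htel
  rw [← htel, mul_sum]
  refine (norm_sum_le _ _).trans (sum_le_sum fun i hi ↦ ?_)
  have hi : ((i + 1 : ℕ) : ℝ) ≤ n := by exact_mod_cast mem_range.mp hi
  push_cast at hi
  refine (ContinuousLinearMap.le_opNorm _ _).trans (mul_le_mul_of_nonneg_right ?_ (norm_nonneg _))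
  exact hScS _ (by nlinarith) (by nlinarith)

lemma norm_hatDelta_step_le {T C β ρ h : ℝ}
    (hκ2 : ∀ s t : ℝ, 0 < s → s ≤ t → t ≤ T → ‖hatDelta S κ t s‖ ≤ C * s ^ (-β) * (t - s) ^ ρ)
    (hh : 0 < h) (i : ℕ) (hiT : (i + 2) * h ≤ T) :
    ‖hatDelta S κ ((i + 2) * h) ((i + 1) * h)‖ ≤ C * h ^ (ρ - β) * ((i : ℝ) + 1) ^ (-β) := by
  have hi : (0 : ℝ) < i + 1 := by positivity
  refine (hκ2 _ _ (by positivity) (by nlinarith) hiT).trans_eq ?_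
  rw [show ((i : ℝ) + 2) * h - (i + 1) * h = h by ring, mul_rpow hi.le hh.le, sub_eq_add_neg,
    rpow_add hh]
  ring

lemma sum_norm_hatDelta_le {T C α β ρ h : ℝ} (hC : 0 ≤ C) (hβ0 : 0 ≤ β) (hβ1 : β < 1)
    (hκ1 : ∀ s t : ℝ, 0 ≤ s → s ≤ t → t ≤ T → ‖hatDelta S κ t s‖ ≤ C * (t - s) ^ α)
    (hκ2 : ∀ s t : ℝ, 0 < s → s ≤ t → t ≤ T → ‖hatDelta S κ t s‖ ≤ C * s ^ (-β) * (t - s) ^ ρ)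
    (hh : 0 < h) (n : ℕ) (hnT : (n + 1) * h ≤ T) :
    ∑ i ∈ range (n + 1), ‖hatDelta S κ ((i + 1) * h) (i * h)‖ ≤
      C * h ^ α + C / (1 - β) * ((n + 1) * h) ^ (1 - β) * h ^ (ρ - 1) := by
  have hβ : 0 < 1 - β := by linarith
  have hfirst : ‖hatDelta S κ h 0‖ ≤ C * h ^ α := by
    simpa using hκ1 0 h le_rfl hh.le (by nlinarith)
  have hrest : ∑ i ∈ range n, ‖hatDelta S κ ((i + 2) * h) ((i + 1) * h)‖ ≤
      C * h ^ (ρ - β) * ((n : ℝ) ^ (1 - β) / (1 - β)) := by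
    refine (sum_le_sum fun i hi ↦ norm_hatDelta_step_le hκ2 hh i ?_).trans ?_
    · have : (i : ℝ) + 1 ≤ n := by exact_mod_cast mem_range.mp hi
      nlinarith
    · rw [← mul_sum]
      exact mul_le_mul_of_nonneg_left (sum_range_add_one_rpow_neg_le hβ0 hβ1 n) (by positivity)
  rw [sum_range_succ']
  push_cast
  calc _ ≤ C * h ^ (ρ - β) * ((n : ℝ) ^ (1 - β) / (1 - β)) + C * h ^ α := by
        simpa [add_assoc, one_add_one_eq_two] using add_le_add hrest hfirst
    _ ≤ C * h ^ (ρ - β) * (((n : ℝ) + 1) ^ (1 - β) / (1 - β)) + C * h ^ α := by gcongr; linarith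
    _ = _ := by
      rw [mul_rpow (by positivity) hh.le, show ρ - β = (1 - β) + (ρ - 1) by ring, rpow_add hh]
      field_simp
      ring

end Semigroup

theorem kappa_eq_zero_of_hat_delta_weighted_small_general
    {W : Type*} [NormedAddCommGroup W] [NormedSpace ℝ W]
    (T : ℝ)
    (S : ℝ → W →L[ℝ] W)
    (hS0 : S 0 = ContinuousLinearMap.id ℝ W)
    (hSadd : ∀ t s : ℝ, 0 ≤ t → 0 ≤ s → S (t + s) = (S t).comp (S s))
    (cS : ℝ) (hScS : ∀ t : ℝ, 0 ≤ t → t ≤ T → ‖S t‖ ≤ cS)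
    (α β ρ C : ℝ) (hα0 : 0 < α) (hβ0 : 0 < β) (hβ1 : β < 1)
    (hρ : 1 < ρ) (hC : 0 ≤ C)
    (κ : ℝ → W) (hκ0 : κ 0 = 0)
    (hκ1 : ∀ s t : ℝ, 0 ≤ s → s ≤ t → t ≤ T →
      ‖κ t - S (t - s) (κ s)‖ ≤ C * (t - s) ^ α)
    (hκ2 : ∀ s t : ℝ, 0 < s → s ≤ t → t ≤ T →
      ‖κ t - S (t - s) (κ s)‖ ≤ C * s ^ (-β) * (t - s) ^ ρ) :
    ∀ t : ℝ, 0 ≤ t → t ≤ T → κ t = 0 := by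
  intro t ht0 htT
  obtain rfl | ht := ht0.eq_or_lt
  · exact hκ0
  have hcS : 0 ≤ cS := (norm_nonneg _).trans (hScS 0 le_rfl (ht0.trans htT))
  let F : ℝ → ℝ := fun h ↦ cS * (C * h ^ α + C / (1 - β) * t ^ (1 - β) * h ^ (ρ - 1))
  have hF : Tendsto F (𝓝 0) (𝓝 0) := by
    have : ContinuousAt F 0 := by
      fun_prop (disch := first | exact Or.inr hα0.le | exact Or.inr (by linarith))
    simpa [F, zero_rpow hα0.ne', zero_rpow (by linarith : ρ - 1 ≠ 0)] using this.tendsto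
  have hstep : Tendsto (fun n : ℕ ↦ t / ((n : ℝ) + 1)) atTop (𝓝 0) := by
    simpa [div_eq_mul_one_div t] using tendsto_one_div_add_atTop_nhds_zero_nat.const_mul t
  refine norm_le_zero_iff.mp (ge_of_tendsto (hF.comp hstep) (Eventually.of_forall fun n ↦ ?_))
  have hh : 0 < t / ((n : ℝ) + 1) := by positivity
  have hnh : ((n : ℝ) + 1) * (t / ((n : ℝ) + 1)) = t := by field_simp
  calc ‖κ t‖ = ‖κ (((n + 1 : ℕ) : ℝ) * (t / ((n : ℝ) + 1)))‖ := by push_cast; rw [hnh]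
    _ ≤ cS * ∑ i ∈ range (n + 1),
          ‖hatDelta S κ ((i + 1) * (t / ((n : ℝ) + 1))) (i * (t / ((n : ℝ) + 1)))‖ :=
        norm_le_mul_sum_norm_hatDelta hS0 hSadd hκ0 hh.le (n + 1) fun τ hτ0 hτ ↦
          hScS τ hτ0 (by push_cast at hτ; linarith)
    _ ≤ F (t / ((n : ℝ) + 1)) := by
        refine mul_le_mul_of_nonneg_left ?_ hcS
        simpa only [hnh] using sum_norm_hatDelta_le hC hβ0.le hβ1 hκ1 hκ2 hh n (by rwa [hnh])

/-- Uniqueness lemma with a weighted bound. -/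
theorem kappa_eq_zero_of_hat_delta_weighted_small
    {W : Type*} [NormedAddCommGroup W] [NormedSpace ℝ W]
    (T : ℝ) (hT : 0 < T)
    (S : ℝ → W →L[ℝ] W)
    (hS0 : S 0 = ContinuousLinearMap.id ℝ W)
    (hSadd : ∀ t s : ℝ, 0 ≤ t → 0 ≤ s → S (t + s) = (S t).comp (S s))
    (cS : ℝ) (hScS : ∀ t : ℝ, 0 ≤ t → t ≤ T → ‖S t‖ ≤ cS)
    (α β ρ C : ℝ) (hα0 : 0 < α) (hα1 : α < 1) (hβ0 : 0 < β) (hβ1 : β < 1)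
    (hρ : 1 < ρ) (hC : 0 ≤ C)
    (κ : ℝ → W) (hκcont : ContinuousOn κ (Set.Icc 0 T)) (hκ0 : κ 0 = 0)
    (hκ1 : ∀ s t : ℝ, 0 ≤ s → s ≤ t → t ≤ T →
      ‖κ t - S (t - s) (κ s)‖ ≤ C * (t - s) ^ α)
    (hκ2 : ∀ s t : ℝ, 0 < s → s ≤ t → t ≤ T →
      ‖κ t - S (t - s) (κ s)‖ ≤ C * s ^ (-β) * (t - s) ^ ρ) :
    ∀ t : ℝ, 0 ≤ t → t ≤ T → κ t = 0 :=
  kappa_eq_zero_of_hat_delta_weighted_small_general T S hS0 hSadd cS hScS α β ρ C hα0 hβ0 hβ1 hρ hC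
    κ hκ0 hκ1 hκ2
end
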